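/- Let U, V ⊆ ℂ be open, let ρ : V → ℝ be smooth and strictly positive, and let ψ : U → V be holomorphic with nowhere vanishing derivative. Then for every z ∈ U, ∂∂̄[ Real.log(ρ(ψ(z))·|ψ'(z)|²) ] = (∂∂̄[Real.log ∘ ρ])(ψ(z)) · |ψ'(z)|², where ∂ and ∂̄ are the Wirtinger derivatives. In particular ∂∂̄ log|ψ'(z)|² = 0, i.e. the curvature 2-form R^ν = ∂∂̄ log ρ of the Kähler metric ρ dz⊗dz̄ transforms by pullback under conformal transformations. -/

import Mathlib

/-! The real differential of any `F : ℂ → ℂ` splits as `DF(p) v = ∂F(p) v + ∂̄F(p) v̄`, and `∂F(p)`,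
`∂̄F(p)` can be read off from any such splitting; this gives the sum, product, conjugation and
holomorphic chain rules for the Wirtinger derivatives at once. For holomorphic `ψ` the chain rule
gives `∂̄(G ∘ ψ) = (∂̄G ∘ ψ) · conj ψ'`, and since `conj ψ'` is antiholomorphic,
`∂∂̄(G ∘ ψ) = (∂∂̄G ∘ ψ) · |ψ'|²`. Near a point where `ψ' ≠ 0` we have
`∂̄ log |ψ'|² = conj (ψ'' / ψ')`, which is antiholomorphic and hence killed by `∂`; together with
`log (ρ(ψ) |ψ'|²) = log ρ(ψ) + log |ψ'|²` this proves both claims. -/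

/-- The Wirtinger derivative ∂F(p) = ½(DF(p)(1) − i·DF(p)(i)) of a function F : ℂ → ℂ,
where DF(p) is the real Fréchet derivative of F at p. -/
noncomputable def wirtP (F : ℂ → ℂ) (p : ℂ) : ℂ :=
  (1 / 2 : ℂ) * (fderiv ℝ F p 1 - Complex.I * fderiv ℝ F p Complex.I)

/-- The conjugate Wirtinger derivative ∂̄F(p) = ½(DF(p)(1) + i·DF(p)(i)). -/
noncomputable def wirtM (F : ℂ → ℂ) (p : ℂ) : ℂ :=
  (1 / 2 : ℂ) * (fderiv ℝ F p 1 + Complex.I * fderiv ℝ F p Complex.I)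

open Complex ComplexConjugate Filter Topology

section FirstOrder

variable {F G : ℂ → ℂ} {p : ℂ}

theorem fderiv_apply_eq_wirtP_add_wirtM (F : ℂ → ℂ) (p v : ℂ) :
    fderiv ℝ F p v = wirtP F p * v + wirtM F p * conj v := by
  have hv : v = v.re • (1 : ℂ) + v.im • I := by simp [Complex.real_smul, re_add_im]
  conv_lhs => rw [hv, map_add, map_smul, map_smul, real_smul, real_smul]
  conv_rhs => rw [← re_add_im v]
  simp only [wirtP, wirtM, map_add, map_mul, conj_ofReal, conj_I]
  linear_combination ((v.im : ℂ) * fderiv ℝ F p I) * I_sq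

theorem wirtP_eq_of_fderiv_apply {A B : ℂ} (h : ∀ v, fderiv ℝ F p v = A * v + B * conj v) :
    wirtP F p = A := by
  simp only [wirtP, h, map_one, conj_I]
  linear_combination ((B - A) / 2) * I_sq

theorem wirtM_eq_of_fderiv_apply {A B : ℂ} (h : ∀ v, fderiv ℝ F p v = A * v + B * conj v) :
    wirtM F p = B := by
  simp only [wirtM, h, map_one, conj_I]
  linear_combination ((A - B) / 2) * I_sq

theorem fderiv_real_apply_eq_deriv_mul (hF : DifferentiableAt ℂ F p) (v : ℂ) :
    fderiv ℝ F p v = deriv F p * v := by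
  rw [hF.fderiv_restrictScalars ℝ, hF.hasDerivAt.hasFDerivAt.fderiv,
    ContinuousLinearMap.coe_restrictScalars', ContinuousLinearMap.toSpanSingleton_apply,
    smul_eq_mul, mul_comm]

theorem wirtP_eq_deriv (hF : DifferentiableAt ℂ F p) : wirtP F p = deriv F p :=
  wirtP_eq_of_fderiv_apply (B := 0) fun v => by
    rw [fderiv_real_apply_eq_deriv_mul hF, zero_mul, add_zero]

theorem wirtM_eq_zero_of_differentiableAt (hF : DifferentiableAt ℂ F p) : wirtM F p = 0 :=
  wirtM_eq_of_fderiv_apply (A := deriv F p) fun v => by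
    rw [fderiv_real_apply_eq_deriv_mul hF, zero_mul, add_zero]

theorem fderiv_conj_apply (F : ℂ → ℂ) (p v : ℂ) :
    fderiv ℝ (fun w => conj (F w)) p v = conj (fderiv ℝ F p v) :=
  congrArg (· v) (fderiv_star (𝕜 := ℝ) (f := F) (x := p))

theorem wirtP_conj (F : ℂ → ℂ) (p : ℂ) : wirtP (fun w => conj (F w)) p = conj (wirtM F p) :=
  wirtP_eq_of_fderiv_apply (B := conj (wirtP F p)) fun v => by
    rw [fderiv_conj_apply, fderiv_apply_eq_wirtP_add_wirtM, map_add, map_mul, map_mul,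
      conj_conj, add_comm]

theorem wirtM_conj (F : ℂ → ℂ) (p : ℂ) : wirtM (fun w => conj (F w)) p = conj (wirtP F p) :=
  wirtM_eq_of_fderiv_apply (A := conj (wirtM F p)) fun v => by
    rw [fderiv_conj_apply, fderiv_apply_eq_wirtP_add_wirtM, map_add, map_mul, map_mul,
      conj_conj, add_comm]

theorem wirtP_add (hF : DifferentiableAt ℝ F p) (hG : DifferentiableAt ℝ G p) :
    wirtP (fun w => F w + G w) p = wirtP F p + wirtP G p :=
  wirtP_eq_of_fderiv_apply (B := wirtM F p + wirtM G p) fun v => by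
    rw [fderiv_fun_add hF hG, add_apply, fderiv_apply_eq_wirtP_add_wirtM F,
      fderiv_apply_eq_wirtP_add_wirtM G]
    ring

theorem wirtM_add (hF : DifferentiableAt ℝ F p) (hG : DifferentiableAt ℝ G p) :
    wirtM (fun w => F w + G w) p = wirtM F p + wirtM G p :=
  wirtM_eq_of_fderiv_apply (A := wirtP F p + wirtP G p) fun v => by
    rw [fderiv_fun_add hF hG, add_apply, fderiv_apply_eq_wirtP_add_wirtM F,
      fderiv_apply_eq_wirtP_add_wirtM G]
    ring

theorem wirtP_mul (hF : DifferentiableAt ℝ F p) (hG : DifferentiableAt ℝ G p) :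
    wirtP (fun w => F w * G w) p = wirtP F p * G p + F p * wirtP G p :=
  wirtP_eq_of_fderiv_apply (B := wirtM F p * G p + F p * wirtM G p) fun v => by
    rw [fderiv_fun_mul hF hG, add_apply, smul_apply, smul_apply, smul_eq_mul, smul_eq_mul,
      fderiv_apply_eq_wirtP_add_wirtM F, fderiv_apply_eq_wirtP_add_wirtM G]
    ring

theorem wirtM_mul (hF : DifferentiableAt ℝ F p) (hG : DifferentiableAt ℝ G p) :
    wirtM (fun w => F w * G w) p = wirtM F p * G p + F p * wirtM G p :=
  wirtM_eq_of_fderiv_apply (A := wirtP F p * G p + F p * wirtP G p) fun v => by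
    rw [fderiv_fun_mul hF hG, add_apply, smul_apply, smul_apply, smul_eq_mul, smul_eq_mul,
      fderiv_apply_eq_wirtP_add_wirtM F, fderiv_apply_eq_wirtP_add_wirtM G]
    ring

theorem fderiv_real_comp_apply {ψ : ℂ → ℂ} (hG : DifferentiableAt ℝ G (ψ p))
    (hψ : DifferentiableAt ℂ ψ p) (v : ℂ) :
    fderiv ℝ (fun w => G (ψ w)) p v = fderiv ℝ G (ψ p) (deriv ψ p * v) := by
  rw [← Function.comp_def, fderiv_comp p hG (hψ.restrictScalars ℝ),
    ContinuousLinearMap.comp_apply, fderiv_real_apply_eq_deriv_mul hψ]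

theorem wirtP_comp {ψ : ℂ → ℂ} (hG : DifferentiableAt ℝ G (ψ p)) (hψ : DifferentiableAt ℂ ψ p) :
    wirtP (fun w => G (ψ w)) p = wirtP G (ψ p) * deriv ψ p :=
  wirtP_eq_of_fderiv_apply (B := wirtM G (ψ p) * conj (deriv ψ p)) fun v => by
    rw [fderiv_real_comp_apply hG hψ, fderiv_apply_eq_wirtP_add_wirtM, map_mul]
    ring

theorem wirtM_comp {ψ : ℂ → ℂ} (hG : DifferentiableAt ℝ G (ψ p)) (hψ : DifferentiableAt ℂ ψ p) :
    wirtM (fun w => G (ψ w)) p = wirtM G (ψ p) * conj (deriv ψ p) :=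
  wirtM_eq_of_fderiv_apply (A := wirtP G (ψ p) * deriv ψ p) fun v => by
    rw [fderiv_real_comp_apply hG hψ, fderiv_apply_eq_wirtP_add_wirtM, map_mul]
    ring

theorem wirtM_ofReal_log {N : ℂ → ℝ} (hN : DifferentiableAt ℝ N p) (h0 : N p ≠ 0) :
    wirtM (fun w => (Real.log (N w) : ℂ)) p = wirtM (fun w => (N w : ℂ)) p / N p := by
  have hlog := (ofRealCLM.hasFDerivAt.comp p (hN.hasFDerivAt.log h0)).fderiv
  have hcast := (ofRealCLM.hasFDerivAt.comp p hN.hasFDerivAt).fderiv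
  simp only [Function.comp_def, ofRealCLM_apply] at hlog hcast
  simp only [wirtM, hlog, hcast, ContinuousLinearMap.comp_apply, smul_apply,
    ofRealCLM_apply, smul_eq_mul, ofReal_mul, ofReal_inv]
  field_simp

theorem wirtM_ofReal_log_norm_sq (hF : DifferentiableAt ℂ F p) (h0 : F p ≠ 0) :
    wirtM (fun w => (Real.log (‖F w‖ ^ 2) : ℂ)) p = conj (deriv F p / F p) := by
  have hnorm : (fun w => ((‖F w‖ ^ 2 : ℝ) : ℂ)) = fun w => F w * conj (F w) := by
    ext w; push_cast; exact (mul_conj' (F w)).symm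
  have hF' := hF.restrictScalars ℝ
  have hconj : DifferentiableAt ℝ (fun w => conj (F w)) p := hF'.star
  rw [wirtM_ofReal_log (hF'.norm_sq ℝ) (by positivity), hnorm, wirtM_mul hF' hconj,
    wirtM_eq_zero_of_differentiableAt hF, wirtM_conj, wirtP_eq_deriv hF, zero_mul, zero_add,
    map_div₀]
  have hconj0 : conj (F p) ≠ 0 := (map_ne_zero _).mpr h0
  push_cast
  rw [← mul_conj']
  field_simp

end FirstOrder

section SecondOrder

variable {F G : ℂ → ℂ} {p : ℂ}

theorem Filter.EventuallyEq.wirtP_eq (h : F =ᶠ[𝓝 p] G) : wirtP F p = wirtP G p := by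
  simp only [wirtP, h.fderiv_eq]

theorem Filter.EventuallyEq.wirtM_eq (h : F =ᶠ[𝓝 p] G) : wirtM F p = wirtM G p := by
  simp only [wirtM, h.fderiv_eq]

theorem Filter.EventuallyEq.wirtP_wirtM_eq (h : F =ᶠ[𝓝 p] G) :
    wirtP (wirtM F) p = wirtP (wirtM G) p :=
  Filter.EventuallyEq.wirtP_eq (h.eventuallyEq_nhds.mono fun _ hq => hq.wirtM_eq)

theorem ContDiffAt.differentiableAt_wirtM (hF : ContDiffAt ℝ 2 F p) :
    DifferentiableAt ℝ (wirtM F) p := by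
  have hD : DifferentiableAt ℝ (fderiv ℝ F) p :=
    (hF.fderiv_right (m := 1) le_rfl).differentiableAt one_ne_zero
  unfold wirtM
  fun_prop

theorem wirtP_wirtM_add (hF : ContDiffAt ℝ 2 F p) (hG : ContDiffAt ℝ 2 G p) :
    wirtP (wirtM fun w => F w + G w) p = wirtP (wirtM F) p + wirtP (wirtM G) p := by
  have near : wirtM (fun w => F w + G w) =ᶠ[𝓝 p] fun w => wirtM F w + wirtM G w := by
    filter_upwards [hF.eventually (by simp), hG.eventually (by simp)] with q hFq hGq
    exact wirtM_add (hFq.differentiableAt two_ne_zero) (hGq.differentiableAt two_ne_zero)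
  rw [near.wirtP_eq, wirtP_add hF.differentiableAt_wirtM hG.differentiableAt_wirtM]

theorem wirtP_wirtM_comp {ψ : ℂ → ℂ} (hG : ContDiffAt ℝ 2 G (ψ p)) (hψ : AnalyticAt ℂ ψ p) :
    wirtP (wirtM fun w => G (ψ w)) p = wirtP (wirtM G) (ψ p) * (‖deriv ψ p‖ ^ 2 : ℝ) := by
  have near : wirtM (fun w => G (ψ w)) =ᶠ[𝓝 p] fun w => wirtM G (ψ w) * conj (deriv ψ w) := by
    filter_upwards [hψ.continuousAt.tendsto.eventually (hG.eventually (by simp)),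
      hψ.eventually_analyticAt] with w hGw hψw
    exact wirtM_comp (hGw.differentiableAt two_ne_zero) hψw.differentiableAt
  have hψ' : DifferentiableAt ℂ (deriv ψ) p := hψ.deriv.differentiableAt
  have hM : DifferentiableAt ℝ (fun w => wirtM G (ψ w)) p :=
    hG.differentiableAt_wirtM.comp p (hψ.differentiableAt.restrictScalars ℝ)
  have hconj : DifferentiableAt ℝ (fun w => conj (deriv ψ w)) p := (hψ'.restrictScalars ℝ).star
  rw [near.wirtP_eq, wirtP_mul hM hconj, wirtP_comp hG.differentiableAt_wirtM hψ.differentiableAt,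
    wirtP_conj, wirtM_eq_zero_of_differentiableAt hψ', map_zero, mul_zero, add_zero, mul_assoc,
    mul_conj', ofReal_pow]

theorem wirtP_wirtM_ofReal_log_norm_sq (hF : AnalyticAt ℂ F p) (h0 : F p ≠ 0) :
    wirtP (wirtM fun w => (Real.log (‖F w‖ ^ 2) : ℂ)) p = 0 := by
  have near : wirtM (fun w => (Real.log (‖F w‖ ^ 2) : ℂ)) =ᶠ[𝓝 p]
      fun w => conj (deriv F w / F w) := by
    filter_upwards [hF.eventually_analyticAt, hF.continuousAt.eventually_ne h0] with w hFw hw0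
    exact wirtM_ofReal_log_norm_sq hFw.differentiableAt hw0
  have hquot : DifferentiableAt ℂ (fun w => deriv F w / F w) p :=
    (hF.deriv.div hF h0).differentiableAt
  rw [near.wirtP_eq, wirtP_conj, wirtM_eq_zero_of_differentiableAt hquot, map_zero]

end SecondOrder

/-- Conformal transformation rule of the curvature R^ν = ∂∂̄ log ρ of the Kähler
metric ρ dz⊗dz̄: for ρ smooth and positive on V and ψ : U → V holomorphic with
nowhere vanishing derivative, ∂∂̄ log(ρ(ψ(z))·|ψ'(z)|²) = (∂∂̄ log ρ)(ψ(z))·|ψ'(z)|²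
for every z ∈ U; in particular ∂∂̄ log|ψ'(z)|² = 0. -/
theorem stmt17 (U V : Set ℂ) (hU : IsOpen U) (hV : IsOpen V)
    (ρ : ℂ → ℝ) (hρ : ContDiffOn ℝ (⊤ : ℕ∞) ρ V) (hρpos : ∀ z ∈ V, 0 < ρ z)
    (ψ : ℂ → ℂ) (hψ : DifferentiableOn ℂ ψ U) (hm : Set.MapsTo ψ U V)
    (hne : ∀ z ∈ U, deriv ψ z ≠ 0) :
    (∀ z ∈ U,
      wirtP (wirtM fun w => (Real.log (ρ (ψ w) * ‖deriv ψ w‖ ^ 2) : ℂ)) z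
        = wirtP (wirtM fun w => (Real.log (ρ w) : ℂ)) (ψ z)
            * ((‖deriv ψ z‖ ^ 2 : ℝ) : ℂ)) ∧
      ∀ z ∈ U,
        wirtP (wirtM fun w => (Real.log (‖deriv ψ w‖ ^ 2) : ℂ)) z = 0 := by
  have hψa : AnalyticOnNhd ℂ ψ U := hψ.analyticOnNhd hU
  refine ⟨fun z hz => ?_, fun z hz => wirtP_wirtM_ofReal_log_norm_sq (hψa z hz).deriv (hne z hz)⟩
  have hlogρ : ContDiffAt ℝ 2 (fun w => (Real.log (ρ w) : ℂ)) (ψ z) :=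
    ofRealCLM.contDiff.contDiffAt.comp _ <|
      ((hρ.contDiffAt (hV.mem_nhds (hm hz))).log (hρpos _ (hm hz)).ne').of_le
        (WithTop.coe_le_coe.mpr le_top)
  have hlogρψ : ContDiffAt ℝ 2 (fun w => (Real.log (ρ (ψ w)) : ℂ)) z :=
    hlogρ.comp z (((hψa z hz).contDiffAt (n := 2)).restrict_scalars ℝ)
  have hlogN : ContDiffAt ℝ 2 (fun w => (Real.log (‖deriv ψ w‖ ^ 2) : ℂ)) z :=
    ofRealCLM.contDiff.contDiffAt.comp _ <|
      ((((hψa z hz).deriv.contDiffAt (n := 2)).restrict_scalars ℝ).norm_sq ℝ).log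
        (by simpa using hne z hz)
  have hsplit : (fun w => (Real.log (ρ (ψ w) * ‖deriv ψ w‖ ^ 2) : ℂ)) =ᶠ[𝓝 z]
      fun w => (Real.log (ρ (ψ w)) : ℂ) + (Real.log (‖deriv ψ w‖ ^ 2) : ℂ) := by
    filter_upwards [hU.mem_nhds hz] with w hw
    rw [Real.log_mul (hρpos _ (hm hw)).ne' (by simpa using hne w hw), ofReal_add]
  rw [hsplit.wirtP_wirtM_eq, wirtP_wirtM_add hlogρψ hlogN, wirtP_wirtM_comp hlogρ (hψa z hz),
    wirtP_wirtM_ofReal_log_norm_sq (hψa z hz).deriv (hne z hz), add_zero]
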